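/- arXiv:2502.04084 — 5 statements merged into one kernel-verified Lean document; each statement's English description precedes it below -/
import Mathlib

section
/- For every a = (a₁,a₂) ∈ ℚ² with a ∉ ℤ² and every τ in the upper half-plane ℍ: (i) g₍₋ₐ₎(τ) = −gₐ(τ); and (ii) for every b = (b₁,b₂) ∈ ℤ², g₍ₐ₊ᵦ₎(τ) = (−1)^{b₁b₂+b₁+b₂} · e^{−πi(b₁a₂−b₂a₁)} · gₐ(τ). -/
noncomputable section

open Complex Filter Matrix

namespace SiegelPaper

/-- The second Bernoulli polynomial (complex variable). -/
def B2 (x : ℂ) : ℂ := x ^ 2 - x + 1 / 6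

/-- The second Bernoulli polynomial (real variable). -/
def B2R (x : ℝ) : ℝ := x ^ 2 - x + 1 / 6

/-- The Siegel function `g_a(τ)` attached to `a = (a₁, a₂) ∈ ℚ²`, defined (for `τ` in the
upper half-plane) by the convergent product
`g_a(τ) = −e^{πi a₂(a₁−1)} · e^{πiτ B₂(a₁)} · (1 − q_z) · ∏_{m≥1} (1 − qᵐ q_z)(1 − qᵐ q_z⁻¹)`
where `q = e^{2πiτ}` and `q_z = e^{2πi(a₁ τ + a₂)}`. -/
def siegel (a : ℚ × ℚ) (τ : ℂ) : ℂ :=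
  -Complex.exp (Real.pi * I * (a.2 : ℂ) * ((a.1 : ℂ) - 1)) *
    Complex.exp (Real.pi * I * τ * B2 (a.1 : ℂ)) *
    (1 - Complex.exp (2 * Real.pi * I * ((a.1 : ℂ) * τ + (a.2 : ℂ)))) *
    ∏' m : ℕ,
      ((1 - Complex.exp (2 * Real.pi * I * τ) ^ (m + 1) *
            Complex.exp (2 * Real.pi * I * ((a.1 : ℂ) * τ + (a.2 : ℂ)))) *
        (1 - Complex.exp (2 * Real.pi * I * τ) ^ (m + 1) /
            Complex.exp (2 * Real.pi * I * ((a.1 : ℂ) * τ + (a.2 : ℂ)))))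

/-- `a ∈ ℚ²` lies in `ℤ²`. -/
def isIntegral (a : ℚ × ℚ) : Prop := (∃ m : ℤ, a.1 = m) ∧ (∃ m : ℤ, a.2 = m)

/-- The filter `Im τ → ∞` on `ℂ`. -/
def atImInfty : Filter ℂ := Filter.comap Complex.im Filter.atTop

/-- `E_i(τ) = g_{(αⁱ/p, 0)}(τ) · ∏_{j=0}^{p−2} g_{(αⁱ/p, αʲ/p)}(τ)`. -/
def E (p : ℕ) (α : ℤ) (i : ℕ) (τ : ℂ) : ℂ :=
  siegel ((α : ℚ) ^ i / (p : ℚ), 0) τ *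
    ∏ j ∈ Finset.range (p - 1), siegel ((α : ℚ) ^ i / (p : ℚ), (α : ℚ) ^ j / (p : ℚ)) τ

/-- `F_i(τ) = g_{(0, αⁱ/p)}(τ)`. -/
def F (p : ℕ) (α : ℤ) (i : ℕ) (τ : ℂ) : ℂ :=
  siegel (0, (α : ℚ) ^ i / (p : ℚ)) τ

/-- The Möbius action of a matrix in `SL₂(ℤ)` on (the upper half-plane inside) `ℂ`. -/
def moebius (γ : Matrix.SpecialLinearGroup (Fin 2) ℤ) (τ : ℂ) : ℂ :=
  ((γ.1 0 0 : ℂ) * τ + (γ.1 0 1 : ℂ)) / ((γ.1 1 0 : ℂ) * τ + (γ.1 1 1 : ℂ))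

/-- A modular unit on `X₁(p)`: a function `f : ℍ → ℂ` which is holomorphic and nowhere
vanishing on the upper half-plane, invariant under `Γ₁(p)`, and meromorphic at the cusps. -/
structure IsModularUnit (p : ℕ) (f : ℂ → ℂ) : Prop where
  holo : ∀ τ : ℂ, 0 < τ.im → DifferentiableAt ℂ f τ
  ne_zero : ∀ τ : ℂ, 0 < τ.im → f τ ≠ 0
  invariant : ∀ γ ∈ CongruenceSubgroup.Gamma1 p, ∀ τ : ℂ, 0 < τ.im → f (moebius γ τ) = f τ
  merom_at_cusps : ∀ γ : Matrix.SpecialLinearGroup (Fin 2) ℤ, ∃ m : ℤ, ∃ L : ℂ, L ≠ 0 ∧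
    Filter.Tendsto (fun τ : ℂ => f (moebius γ τ) *
        Complex.exp (-(2 * Real.pi * I * (m : ℂ) * τ) / (p : ℂ)))
      atImInfty (nhds L)

/-- `f` has order `r` at the cusp `P_i` (represented by `αⁱ/p`, of width 1):
for any `γ ∈ SL₂(ℤ)` with first column `(αⁱ, p)ᵀ`, `f(γ·τ)·e^{−2πi r τ}` tends to a
nonzero limit as `Im τ → ∞`. -/
def HasOrderAtP (p : ℕ) (α : ℤ) (i : ℕ) (f : ℂ → ℂ) (r : ℝ) : Prop :=
  ∀ γ : Matrix.SpecialLinearGroup (Fin 2) ℤ, γ.1 0 0 = α ^ i → γ.1 1 0 = (p : ℤ) →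
    ∃ L : ℂ, L ≠ 0 ∧ Filter.Tendsto
      (fun τ : ℂ => f (moebius γ τ) * Complex.exp (-(2 * Real.pi * I * (r : ℂ) * τ)))
      atImInfty (nhds L)

/-- `f` has order `r` at the cusp `Q_i` (represented by `p/αⁱ`, of width `p`):
for any `γ ∈ SL₂(ℤ)` with first column `(p, αⁱ)ᵀ`, `f(γ·τ)·e^{−2πi r τ/p}` tends to a
nonzero limit as `Im τ → ∞`. -/
def HasOrderAtQ (p : ℕ) (α : ℤ) (i : ℕ) (f : ℂ → ℂ) (r : ℝ) : Prop :=
  ∀ γ : Matrix.SpecialLinearGroup (Fin 2) ℤ, γ.1 0 0 = (p : ℤ) → γ.1 1 0 = α ^ i →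
    ∃ L : ℂ, L ≠ 0 ∧ Filter.Tendsto
      (fun τ : ℂ => f (moebius γ τ) * Complex.exp (-(2 * Real.pi * I * (r : ℂ) * τ) / (p : ℂ)))
      atImInfty (nhds L)

/-- The matrix `γ_k = [[1, α^k],[0,1]] ∈ SL₂(ℤ)`. -/
def gammaMat (α : ℤ) (k : ℕ) : Matrix.SpecialLinearGroup (Fin 2) ℤ :=
  ⟨!![1, α ^ k; 0, 1], by simp [Matrix.det_fin_two_of]⟩

/-- `G_i = E_i · E_{n−1}^{−α^{2i+2}} · F_{n−1}^{p(α^{2i+2}−1)}` for `0 ≤ i ≤ n−2`, and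
`G_{n−1} = E_{n−1}^p · F_{n−1}^{−βp}`. -/
def G (p n : ℕ) (α β : ℤ) (i : ℕ) (τ : ℂ) : ℂ :=
  if i = n - 1 then E p α (n - 1) τ ^ (p : ℤ) * F p α (n - 1) τ ^ (-(β * (p : ℤ)))
  else
    E p α i τ * E p α (n - 1) τ ^ (-(α ^ (2 * i + 2))) *
      F p α (n - 1) τ ^ ((p : ℤ) * (α ^ (2 * i + 2) - 1))

/-- `H_i = F_i · F_{n−1}^{−α^{2i+2}+pβ(α^{2i+2}−1)}` for `0 ≤ i ≤ n−2`, and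
`H_{n−1} = F_{n−1}^{12p}`. -/
def H (p n : ℕ) (α β : ℤ) (i : ℕ) (τ : ℂ) : ℂ :=
  if i = n - 1 then F p α (n - 1) τ ^ (12 * (p : ℤ))
  else F p α i τ * F p α (n - 1) τ ^ (-(α ^ (2 * i + 2)) + (p : ℤ) * β * (α ^ (2 * i + 2) - 1))

/-- `I_i = E_{i−1} · E_i^{−γ²−1} · E_{i+1}^{γ²}` for `1 ≤ i ≤ n−2` (with `γ = α^{p−2}`), and
`I_{n−1} = (E_{n−2}·E_{n−1}⁻¹)^p`. -/
def Ifun (p n : ℕ) (α : ℤ) (i : ℕ) (τ : ℂ) : ℂ :=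
  if i = n - 1 then (E p α (n - 2) τ * (E p α (n - 1) τ)⁻¹) ^ (p : ℤ)
  else
    E p α (i - 1) τ * E p α i τ ^ (-((α ^ (p - 2)) ^ 2) - 1) *
      E p α (i + 1) τ ^ ((α ^ (p - 2)) ^ 2)

/-- `a_t = (p/2)·B₂({αᵗ/p})`, as a complex number. -/
def aC (p : ℕ) (α : ℤ) (t : ℕ) : ℂ :=
  ((p : ℂ) / 2) * B2 ((Int.fract ((α : ℝ) ^ t / (p : ℝ)) : ℝ) : ℂ)

/-- `y_s = ∑_{t<n} ω^{st}·a_t` (so `4·y_s = B_{2,χ_s}`). -/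
def yC (p n : ℕ) (α : ℤ) (ω : ℂ) (s : ℕ) : ℂ :=
  ∑ t ∈ Finset.range n, ω ^ (s * t) * aC p α t

/-- `b_j = (1/n)·∑_{s<n} ω^{−js}·y_s⁻¹`. -/
def bC (p n : ℕ) (α : ℤ) (ω : ℂ) (j : ℕ) : ℂ :=
  (1 / (n : ℂ)) * ∑ s ∈ Finset.range n, ω ^ (-(j * s : ℤ)) * (yC p n α ω s)⁻¹

/-- `c_0 = b_0 − b_1`, `c_1 = b_{n−1} − b_0`, `c_i = b_{n−i} − b_{n+1−i}` for `2 ≤ i ≤ n−1`. -/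
def cC (p n : ℕ) (α : ℤ) (ω : ℂ) (i : ℕ) : ℂ :=
  if i = 0 then bC p n α ω 0 - bC p n α ω 1
  else if i = 1 then bC p n α ω (n - 1) - bC p n α ω 0
  else bC p n α ω (n - i) - bC p n α ω (n + 1 - i)

/-- The generalized Bernoulli number `B_{2,χ} = p·∑_{a=1}^{p−1} χ(a)·B₂(a/p)`. -/
def B2chi (p : ℕ) (χ : DirichletCharacter ℂ p) : ℂ :=
  (p : ℂ) * ∑ a ∈ Finset.Icc 1 (p - 1), χ (a : ZMod p) * B2 ((a : ℂ) / (p : ℂ))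

/-!
With `q = e^{2πiτ}` and `q_z = e^{2πi(a₁τ + a₂)}`, the Siegel function is an elementary
exponential factor times `θ(q, q_z)`, where `θ(q, w) = (1 - w) ∏_{m ≥ 1} (1 - qᵐ w)(1 - qᵐ / w)`.
Negating `a` replaces `q_z` by `q_z⁻¹`, and `θ(q, w⁻¹) = -w⁻¹ θ(q, w)` factor by factor.
Shifting `a₂` by one leaves `q_z` unchanged. Shifting `a₁` by one replaces `q_z` by `q q_z`;
writing `θ(q, w) = (w; q)_∞ (q/w; q)_∞` and peeling off one factor of each `q`-Pochhammer
symbol gives `θ(q, q w) = -w⁻¹ θ(q, w)`. Each unit shift multiplies `g_a` by a constant that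
does not depend on the shifted coordinate, so a shift by an integer `n` multiplies it by the
`n`-th power of that constant.
-/

theorem eq_zpow_mul_of_add_one {G₀ : Type*} [GroupWithZero G₀] {f : ℤ → G₀} {c : G₀}
    (hc : c ≠ 0) (h : ∀ n, f (n + 1) = c * f n) (n : ℤ) : f n = c ^ n * f 0 := by
  induction n using Int.induction_on with
  | zero => simp
  | succ n ih => rw [h, ih, ← mul_assoc, ← zpow_one_add₀ hc, add_comm]
  | pred n ih =>
    have step := h (-n - 1)
    rw [sub_add_cancel, ih] at step
    rw [← inv_mul_cancel_left₀ hc (f (-n - 1)), ← step, ← mul_assoc, ← _root_.zpow_neg_one,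
      ← zpow_add₀ hc, neg_add_eq_sub]

theorem multipliable_one_sub_pow_mul {q : ℂ} (hq : ‖q‖ < 1) (w : ℂ) :
    Multipliable fun m : ℕ => 1 - q ^ m * w := by
  have hsum : Summable fun m : ℕ => -(q ^ m * w) :=
    ((summable_geometric_of_norm_lt_one hq).mul_right w).neg
  exact (Complex.multipliable_one_add_of_summable hsum).congr fun m => (sub_eq_add_neg _ _).symm

def qPochhammer (q w : ℂ) : ℂ := ∏' m : ℕ, (1 - q ^ m * w)

theorem qPochhammer_eq_one_sub_mul {q : ℂ} (hq : ‖q‖ < 1) (w : ℂ) :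
    qPochhammer q w = (1 - w) * qPochhammer q (q * w) := by
  have hshift : Multipliable fun m : ℕ => 1 - q ^ (m + 1) * w :=
    (multipliable_one_sub_pow_mul hq (q * w)).congr fun m => by ring
  rw [qPochhammer, qPochhammer, tprod_eq_zero_mul' (f := fun m : ℕ => 1 - q ^ m * w) hshift,
    pow_zero, one_mul]
  congr 1
  exact tprod_congr fun m => by ring

def thetaProd (q w : ℂ) : ℂ :=
  (1 - w) * ∏' m : ℕ, ((1 - q ^ (m + 1) * w) * (1 - q ^ (m + 1) / w))

theorem thetaProd_eq_qPochhammer {q : ℂ} (hq : ‖q‖ < 1) (w : ℂ) :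
    thetaProd q w = (1 - w) * qPochhammer q (q * w) * qPochhammer q (q * w⁻¹) := by
  rw [thetaProd, mul_assoc, qPochhammer, qPochhammer,
    ← (multipliable_one_sub_pow_mul hq _).tprod_mul (multipliable_one_sub_pow_mul hq _)]
  congr 1
  exact tprod_congr fun m => by ring

theorem thetaProd_inv (q : ℂ) {w : ℂ} (hw : w ≠ 0) : thetaProd q w⁻¹ = -w⁻¹ * thetaProd q w := by
  have hprod : ∏' m : ℕ, ((1 - q ^ (m + 1) * w⁻¹) * (1 - q ^ (m + 1) / w⁻¹)) =
      ∏' m : ℕ, ((1 - q ^ (m + 1) * w) * (1 - q ^ (m + 1) / w)) :=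
    tprod_congr fun m => by rw [div_inv_eq_mul, div_eq_mul_inv]; ring
  rw [thetaProd, thetaProd, hprod]
  field_simp
  ring

theorem thetaProd_mul_left {q w : ℂ} (hq : ‖q‖ < 1) (hq₀ : q ≠ 0) (hw : w ≠ 0) :
    thetaProd q (q * w) = -w⁻¹ * thetaProd q w := by
  rw [thetaProd_eq_qPochhammer hq, thetaProd_eq_qPochhammer hq, ← qPochhammer_eq_one_sub_mul hq,
    mul_inv, mul_inv_cancel_left₀ hq₀, qPochhammer_eq_one_sub_mul hq w⁻¹]
  field_simp
  ring

theorem siegel_eq_thetaProd (a : ℚ × ℚ) (τ : ℂ) :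
    siegel a τ = -Complex.exp (Real.pi * I * a.2 * (a.1 - 1)) *
      Complex.exp (Real.pi * I * τ * B2 a.1) *
      thetaProd (Complex.exp (2 * Real.pi * I * τ))
        (Complex.exp (2 * Real.pi * I * (a.1 * τ + a.2))) := by
  rw [siegel, thetaProd, mul_assoc]

theorem siegel_neg (a : ℚ × ℚ) (τ : ℂ) : siegel (-a) τ = -siegel a τ := by
  set w := Complex.exp (2 * Real.pi * I * (a.1 * τ + a.2))
  have hw : Complex.exp (2 * Real.pi * I * ((-a).1 * τ + (-a).2)) = w⁻¹ := by
    rw [← Complex.exp_neg]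
    push_cast [Prod.fst_neg, Prod.snd_neg]
    ring_nf
  have scalar : Complex.exp (Real.pi * I * (-a).2 * ((-a).1 - 1)) *
      Complex.exp (Real.pi * I * τ * B2 (-a).1) * w⁻¹ =
      Complex.exp (Real.pi * I * a.2 * (a.1 - 1)) * Complex.exp (Real.pi * I * τ * B2 a.1) := by
    rw [← Complex.exp_neg, ← Complex.exp_add, ← Complex.exp_add, ← Complex.exp_add]
    congr 1
    push_cast [B2, Prod.fst_neg, Prod.snd_neg]
    ring
  rw [siegel_eq_thetaProd, siegel_eq_thetaProd, hw, thetaProd_inv _ (Complex.exp_ne_zero _)]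
  linear_combination thetaProd (Complex.exp (2 * Real.pi * I * τ)) w * scalar

theorem siegel_add_one_fst (a : ℚ × ℚ) {τ : ℂ} (hτ : 0 < τ.im) :
    siegel (a.1 + 1, a.2) τ = -Complex.exp (-(Real.pi * I) * a.2) * siegel a τ := by
  set q := Complex.exp (2 * Real.pi * I * τ)
  set w := Complex.exp (2 * Real.pi * I * (a.1 * τ + a.2))
  have hw : Complex.exp (2 * Real.pi * I * (((a.1 + 1 : ℚ) : ℂ) * τ + a.2)) = q * w := by
    rw [← Complex.exp_add]
    push_cast
    ring_nf
  have scalar : Complex.exp (Real.pi * I * a.2 * (((a.1 + 1 : ℚ) : ℂ) - 1)) *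
      Complex.exp (Real.pi * I * τ * B2 ((a.1 + 1 : ℚ) : ℂ)) * w⁻¹ =
      Complex.exp (-(Real.pi * I) * a.2) * (Complex.exp (Real.pi * I * a.2 * (a.1 - 1)) *
        Complex.exp (Real.pi * I * τ * B2 a.1)) := by
    rw [← Complex.exp_neg, ← Complex.exp_add, ← Complex.exp_add, ← Complex.exp_add,
      ← Complex.exp_add]
    congr 1
    push_cast [B2]
    ring
  rw [siegel_eq_thetaProd, siegel_eq_thetaProd, hw,
    thetaProd_mul_left (UpperHalfPlane.norm_exp_two_pi_I_lt_one ⟨τ, hτ⟩) (Complex.exp_ne_zero _)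
      (Complex.exp_ne_zero _)]
  linear_combination thetaProd q w * scalar

theorem siegel_add_one_snd (a : ℚ × ℚ) (τ : ℂ) :
    siegel (a.1, a.2 + 1) τ = -Complex.exp (Real.pi * I * a.1) * siegel a τ := by
  have hw : Complex.exp (2 * Real.pi * I * (a.1 * τ + ((a.2 + 1 : ℚ) : ℂ))) =
      Complex.exp (2 * Real.pi * I * (a.1 * τ + a.2)) := by
    rw [← Complex.exp_periodic (2 * Real.pi * I * (a.1 * τ + a.2))]
    push_cast
    ring_nf
  have scalar : Complex.exp (Real.pi * I * ((a.2 + 1 : ℚ) : ℂ) * (a.1 - 1)) =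
      -Complex.exp (Real.pi * I * a.1) * Complex.exp (Real.pi * I * a.2 * (a.1 - 1)) := by
    rw [neg_mul, ← Complex.exp_add, ← Complex.exp_sub_pi_mul_I]
    push_cast
    ring_nf
  rw [siegel_eq_thetaProd, siegel_eq_thetaProd, hw, scalar]
  ring

theorem siegel_add_int_fst (a : ℚ × ℚ) {τ : ℂ} (hτ : 0 < τ.im) (n : ℤ) :
    siegel (a.1 + n, a.2) τ = (-Complex.exp (-(Real.pi * I) * a.2)) ^ n * siegel a τ := by
  have key := eq_zpow_mul_of_add_one (f := fun n : ℤ => siegel (a.1 + n, a.2) τ)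
    (c := -Complex.exp (-(Real.pi * I) * a.2)) (neg_ne_zero.2 (Complex.exp_ne_zero _))
    (fun n => ?_) n
  · simpa only [Int.cast_zero, add_zero] using key
  · rw [Int.cast_add, Int.cast_one, ← add_assoc]
    exact siegel_add_one_fst (a.1 + n, a.2) hτ

theorem siegel_add_int_snd (a : ℚ × ℚ) (τ : ℂ) (n : ℤ) :
    siegel (a.1, a.2 + n) τ = (-Complex.exp (Real.pi * I * a.1)) ^ n * siegel a τ := by
  have key := eq_zpow_mul_of_add_one (f := fun n : ℤ => siegel (a.1, a.2 + n) τ)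
    (c := -Complex.exp (Real.pi * I * a.1)) (neg_ne_zero.2 (Complex.exp_ne_zero _))
    (fun n => ?_) n
  · simpa only [Int.cast_zero, add_zero] using key
  · rw [Int.cast_add, Int.cast_one, ← add_assoc]
    exact siegel_add_one_snd (a.1, a.2 + n) τ

theorem statement0_general (a : ℚ × ℚ) (τ : ℂ) (hτ : 0 < τ.im) :
    siegel (-a) τ = -siegel a τ ∧
    ∀ b : ℤ × ℤ,
      siegel (a.1 + b.1, a.2 + b.2) τ =
        (-1 : ℂ) ^ (b.1 * b.2 + b.1 + b.2) *
          Complex.exp (-(Real.pi * I) * ((b.1 : ℂ) * (a.2 : ℂ) - (b.2 : ℂ) * (a.1 : ℂ))) *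
          siegel a τ := by
  refine ⟨siegel_neg a τ, fun b => ?_⟩
  have hb₁b₂ : Complex.exp (Real.pi * I * (b.1 * b.2 : ℤ)) = (-1) ^ (b.1 * b.2) := by
    rw [mul_comm, Complex.exp_int_mul, Complex.exp_pi_mul_I]
  have hexp : Complex.exp (b.2 * (Real.pi * I * ((a.1 + b.1 : ℚ) : ℂ))) *
      Complex.exp (b.1 * (-(Real.pi * I) * a.2)) =
      Complex.exp (Real.pi * I * (b.1 * b.2 : ℤ)) *
        Complex.exp (-(Real.pi * I) * ((b.1 : ℂ) * (a.2 : ℂ) - (b.2 : ℂ) * (a.1 : ℂ))) := by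
    rw [← Complex.exp_add, ← Complex.exp_add]
    congr 1
    push_cast
    ring
  have hsign :
      (-1 : ℂ) ^ (b.1 * b.2 + b.1 + b.2) = (-1) ^ (b.1 * b.2) * (-1) ^ b.1 * (-1) ^ b.2 := by
    rw [zpow_add₀ (by norm_num), zpow_add₀ (by norm_num)]
  rw [siegel_add_int_snd (a.1 + b.1, a.2) τ b.2, siegel_add_int_fst a hτ b.1, ← mul_assoc,
    neg_eq_neg_one_mul (Complex.exp _), neg_eq_neg_one_mul (Complex.exp _), mul_zpow, mul_zpow,
    ← Complex.exp_int_mul, ← Complex.exp_int_mul, hsign, ← hb₁b₂]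
  linear_combination (-1 : ℂ) ^ b.1 * (-1 : ℂ) ^ b.2 * siegel a τ * hexp

/-- elementary transformation properties of Siegel functions:
`g_{−a}(τ) = −g_a(τ)`, and for `b ∈ ℤ²`,
`g_{a+b}(τ) = (−1)^{b₁b₂+b₁+b₂} e^{−πi(b₁a₂−b₂a₁)} g_a(τ)`. -/
theorem statement0 (a : ℚ × ℚ) (ha : ¬ isIntegral a) (τ : ℂ) (hτ : 0 < τ.im) :
    siegel (-a) τ = -siegel a τ ∧
    ∀ b : ℤ × ℤ,
      siegel (a.1 + b.1, a.2 + b.2) τ =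
        (-1 : ℂ) ^ (b.1 * b.2 + b.1 + b.2) *
          Complex.exp (-(Real.pi * I) * ((b.1 : ℂ) * (a.2 : ℂ) - (b.2 : ℂ) * (a.1 : ℂ))) *
          siegel a τ :=
  statement0_general a τ hτ

end SiegelPaper
end
end

section
/- For every k ∈ {0,…,p−2} there exists ζ ∈ ℂ with ζ¹² = 1 such that for all 0 ≤ i ≤ n−1 and all τ ∈ ℍ: E_i(τ + α^k) = ζ^p · (−1)^{α^{i+k}} · e^{πi α^{2i+k}/p} · E_i(τ) and F_i(τ + α^k) = ζ · F_i(τ). -/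
/-! Translating `τ` by an integer `c` multiplies `g_{(a₁, a₂)}` by the twelfth root of unity
`e^{πic/6}` and moves it to `g_{(a₁, a₂ + c a₁)}`; this gives the formula for `F_i` at once.
For `E_i = ∏_{v ∈ S} g_{(αⁱ/p, v/p)}` with `S = {0, α⁰, …, α^{p−2}}` a complete residue system
mod `p`, the translation by `α^k` shifts every `v` by `s = α^{i+k}`. Since
`g_{(a₁, a₂ + m)} = e^{πim(a₁−1)} g_{(a₁, a₂)}` for `m ∈ ℤ`, each factor reduces to that of the
residue of `v`, times an exponential of `⌊v/p⌋`. The residues of `S + s` and of `S` agree, and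
their floor sums differ by exactly `s`, so the shift costs `e^{πis(αⁱ/p−1)}`, which is
`(−1)^s e^{πiα^{2i+k}/p}`. -/

noncomputable section

open Complex Filter Matrix

namespace SiegelPaper

lemma siegel_add_intCast (a : ℚ × ℚ) (c : ℤ) (τ : ℂ) :
    siegel a (τ + c) = exp (Real.pi * I * c / 6) * siegel (a.1, a.2 + a.1 * c) τ := by
  have hq : exp (2 * Real.pi * I * (τ + c)) = exp (2 * Real.pi * I * τ) := by
    rw [show 2 * Real.pi * I * (τ + c) = 2 * Real.pi * I * τ + c * (2 * Real.pi * I) by ring,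
      exp_add, exp_int_mul_two_pi_mul_I, mul_one]
  have hz : exp (2 * Real.pi * I * (a.1 * (τ + c) + a.2)) =
      exp (2 * Real.pi * I * (a.1 * τ + ((a.2 + a.1 * c : ℚ) : ℂ))) := by
    push_cast; ring_nf
  have hprefactor : exp (Real.pi * I * a.2 * (a.1 - 1)) * exp (Real.pi * I * (τ + c) * B2 a.1) =
      exp (Real.pi * I * c / 6) * (exp (Real.pi * I * ((a.2 + a.1 * c : ℚ) : ℂ) * (a.1 - 1)) *
        exp (Real.pi * I * τ * B2 a.1)) := by
    simp only [← exp_add, B2]; push_cast; ring_nf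
  simp only [siegel, hq, hz, neg_mul, hprefactor]
  ring

lemma siegel_snd_add_intCast (a₁ a₂ : ℚ) (m : ℤ) (τ : ℂ) :
    siegel (a₁, a₂ + m) τ = exp (m * (Real.pi * I * (a₁ - 1))) * siegel (a₁, a₂) τ := by
  have hz : exp (2 * Real.pi * I * (a₁ * τ + ((a₂ + m : ℚ) : ℂ))) =
      exp (2 * Real.pi * I * (a₁ * τ + a₂)) := by
    rw [show 2 * Real.pi * I * (a₁ * τ + ((a₂ + m : ℚ) : ℂ)) =
        2 * Real.pi * I * (a₁ * τ + a₂) + m * (2 * Real.pi * I) by push_cast; ring,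
      exp_add, exp_int_mul_two_pi_mul_I, mul_one]
  have hprefactor : exp (Real.pi * I * ((a₂ + m : ℚ) : ℂ) * (a₁ - 1)) =
      exp (m * (Real.pi * I * (a₁ - 1))) * exp (Real.pi * I * a₂ * (a₁ - 1)) := by
    rw [← exp_add]; push_cast; ring_nf
  simp only [siegel, hz, neg_mul, hprefactor]
  ring

lemma bijOn_pow_range_compl_zero {K : Type*} [GroupWithZero K] [Fintype K] [DecidableEq K]
    {a : K} (ha : orderOf a = Fintype.card K - 1) :
    Set.BijOn (a ^ ·) (Finset.range (Fintype.card K - 1)) {0}ᶜ := by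
  have ha₀ : a ≠ 0 := by
    rintro rfl
    have h := pow_orderOf_eq_one (0 : K)
    rw [ha, zero_pow (by have := Fintype.one_lt_card (α := K); omega)] at h
    exact zero_ne_one h
  have hmaps : Set.MapsTo (a ^ ·) (Finset.range (Fintype.card K - 1) : Set ℕ)
      (({0}ᶜ : Finset K) : Set K) := fun j _ => by simpa using pow_ne_zero j ha₀
  have hinj : Set.InjOn (a ^ ·) (Finset.range (Fintype.card K - 1) : Set ℕ) := by
    simpa [← ha, Nat.Iio_eq_range] using pow_injOn_Iio_orderOf (x := a)
  have hsurj := Finset.surjOn_of_injOn_of_card_le _ hmaps hinj (by simp [Finset.card_compl])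
  simpa using Set.BijOn.mk hmaps hinj hsurj

def residueSystem (α : ℤ) : Option ℕ → ℤ
  | none => 0
  | some j => α ^ j

lemma bijOn_residueSystem {p : ℕ} [Fact p.Prime] {α : ℤ}
    (hα : orderOf (α : ZMod p) = p - 1) :
    Set.BijOn (fun j => (residueSystem α j : ZMod p)) (Finset.range (p - 1)).insertNone
      Set.univ := by
  have hpow := bijOn_pow_range_compl_zero (K := ZMod p) (by rwa [ZMod.card])
  rw [ZMod.card] at hpow
  refine ⟨Set.mapsTo_univ _ _, ?_, ?_⟩
  · rintro (_ | j₁) h₁ (_ | j₂) h₂ h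
    · rfl
    · exact absurd h.symm (by simpa [residueSystem] using hpow.mapsTo (by simpa using h₂))
    · exact absurd h (by simpa [residueSystem] using hpow.mapsTo (by simpa using h₁))
    · simp only [residueSystem, Int.cast_pow] at h
      rw [hpow.injOn (by simpa using h₁) (by simpa using h₂) h]
  · intro x _
    by_cases hx : x = 0
    · exact ⟨none, by simp, by simp [residueSystem, hx]⟩
    · obtain ⟨j, hj, rfl⟩ := hpow.surjOn (by simpa using hx)
      exact ⟨some j, by simpa using hj, by simp [residueSystem]⟩

section CompleteResidueSystem

variable {ι : Type*} {p : ℕ} {s : Finset ι} {u : ι → ℤ}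

@[to_additive]
lemma prod_comp_of_bijOn_univ {κ M : Type*} [Fintype κ] [CommMonoid M] {e : ι → κ}
    (he : Set.BijOn e s Set.univ) (g : κ → M) : ∏ j ∈ s, g (e j) = ∏ x, g x :=
  Finset.prod_nbij e (fun _ _ => Finset.mem_univ _) he.injOn (by simpa using he.surjOn)
    fun _ _ => rfl

lemma bijOn_intCast_add (hu : Set.BijOn (fun j => (u j : ZMod p)) s Set.univ) (b : ℤ) :
    Set.BijOn (fun j => ((u j + b : ℤ) : ZMod p)) s Set.univ := by
  simpa [Function.comp_def] using (Equiv.addRight (b : ZMod p)).bijective.bijOn_univ.comp hu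

lemma mul_sum_ediv_of_bijOn [NeZero p] (hu : Set.BijOn (fun j => (u j : ZMod p)) s Set.univ) :
    (p : ℤ) * ∑ j ∈ s, u j / p = ∑ j ∈ s, u j - ∑ x : ZMod p, (x.val : ℤ) := by
  rw [← sum_comp_of_bijOn_univ hu (fun x => (x.val : ℤ)), Finset.mul_sum,
    ← Finset.sum_sub_distrib]
  refine Finset.sum_congr rfl fun j _ => ?_
  rw [ZMod.val_intCast]
  linarith [Int.emod_add_mul_ediv (u j) p]

lemma sum_add_ediv_of_bijOn [NeZero p] (hu : Set.BijOn (fun j => (u j : ZMod p)) s Set.univ)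
    (b : ℤ) :
    ∑ j ∈ s, (u j + b) / p = ∑ j ∈ s, u j / p + b := by
  have hcard : s.card = p := by simpa using sum_comp_of_bijOn_univ hu (fun _ => (1 : ℕ))
  apply mul_left_cancel₀ (Nat.cast_ne_zero.mpr (NeZero.ne p) : (p : ℤ) ≠ 0)
  rw [mul_sum_ediv_of_bijOn (bijOn_intCast_add hu b), mul_add, mul_sum_ediv_of_bijOn hu,
    Finset.sum_add_distrib, Finset.sum_const, hcard, nsmul_eq_mul]
  ring

variable [NeZero p] {f : ℤ → ℂ} {z : ℂ}

lemma prod_eq_exp_mul_prod_val (hu : Set.BijOn (fun j => (u j : ZMod p)) s Set.univ)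
    (hf : ∀ v m : ℤ, f (v + m * p) = exp (m * z) * f v) :
    ∏ j ∈ s, f (u j) = exp ((∑ j ∈ s, u j / p : ℤ) * z) * ∏ x : ZMod p, f x.val := by
  have hreduce : ∀ v : ℤ, f v = exp ((v / p : ℤ) * z) * f ((v : ZMod p).val) := by
    intro v
    rw [← hf, ZMod.val_intCast, mul_comm _ (p : ℤ), Int.emod_add_mul_ediv]
  rw [Finset.prod_congr rfl fun j _ => hreduce (u j), Finset.prod_mul_distrib, ← exp_sum,
    prod_comp_of_bijOn_univ hu (fun x => f x.val), Int.cast_sum, Finset.sum_mul]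

theorem prod_add_eq_exp_mul_prod (hu : Set.BijOn (fun j => (u j : ZMod p)) s Set.univ)
    (hf : ∀ v m : ℤ, f (v + m * p) = exp (m * z) * f v) (b : ℤ) :
    ∏ j ∈ s, f (u j + b) = exp (b * z) * ∏ j ∈ s, f (u j) := by
  rw [prod_eq_exp_mul_prod_val (u := fun j => u j + b) (bijOn_intCast_add hu b) hf,
    prod_eq_exp_mul_prod_val hu hf, sum_add_ediv_of_bijOn hu, ← mul_assoc, ← exp_add]
  push_cast
  ring_nf

end CompleteResidueSystem

lemma exp_intCast_mul_pi_mul_I_mul_sub_one (s : ℤ) (x : ℂ) :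
    exp (s * (Real.pi * I * (x - 1))) = (-1 : ℂ) ^ s * exp (Real.pi * I * s * x) := by
  rw [show (s : ℂ) * (Real.pi * I * (x - 1)) =
      Real.pi * I * s * x + s * (Real.pi * I) + (-s : ℤ) * (2 * Real.pi * I) by push_cast; ring,
    exp_add, exp_add, exp_int_mul_two_pi_mul_I, exp_int_mul, exp_pi_mul_I]
  ring

lemma E_eq_prod_residueSystem (p : ℕ) (α : ℤ) (i : ℕ) (τ : ℂ) :
    E p α i τ = ∏ j ∈ (Finset.range (p - 1)).insertNone,
      siegel ((α : ℚ) ^ i / p, (residueSystem α j : ℚ) / p) τ := by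
  simp [E, Finset.prod_insertNone, residueSystem]

lemma E_add_pow {p : ℕ} [hp : Fact p.Prime] {α : ℤ} (hα : orderOf (α : ZMod p) = p - 1)
    (i k : ℕ) (τ : ℂ) :
    E p α i (τ + (α : ℂ) ^ k) =
      exp (Real.pi * I * (α : ℂ) ^ k / 6) ^ p * (-1 : ℂ) ^ (α ^ (i + k)) *
        exp (Real.pi * I * (α : ℂ) ^ (2 * i + k) / p) * E p α i τ := by
  have hp₀ : (p : ℚ) ≠ 0 := Nat.cast_ne_zero.mpr hp.out.ne_zero
  set A : ℚ := (α : ℚ) ^ i / p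
  have hshift : ∀ j, siegel (A, (residueSystem α j : ℚ) / p) (τ + ((α ^ k : ℤ) : ℂ)) =
      exp (Real.pi * I * ((α ^ k : ℤ) : ℂ) / 6) *
        siegel (A, ((residueSystem α j + α ^ (i + k) : ℤ) : ℚ) / p) τ := by
    intro j
    rw [siegel_add_intCast]
    congr 3
    simp only [A]
    push_cast
    field_simp
    ring
  have hperiodic : ∀ v m : ℤ, siegel (A, ((v + m * p : ℤ) : ℚ) / p) τ =
      exp (m * (Real.pi * I * ((A : ℂ) - 1))) * siegel (A, (v : ℚ) / p) τ := by
    intro v m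
    rw [← siegel_snd_add_intCast]
    congr 3
    push_cast
    field_simp
  rw [show τ + (α : ℂ) ^ k = τ + ((α ^ k : ℤ) : ℂ) by push_cast; rfl,
    E_eq_prod_residueSystem, E_eq_prod_residueSystem, Finset.prod_congr rfl fun j _ => hshift j,
    Finset.prod_mul_distrib, Finset.prod_const, Finset.card_insertNone, Finset.card_range,
    Nat.sub_add_cancel hp.out.one_le,
    prod_add_eq_exp_mul_prod (f := fun v => siegel (A, (v : ℚ) / p) τ) (bijOn_residueSystem hα)
      hperiodic, exp_intCast_mul_pi_mul_I_mul_sub_one]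
  simp only [A]
  push_cast
  ring_nf

lemma F_add_intCast (p : ℕ) (α : ℤ) (i : ℕ) (c : ℤ) (τ : ℂ) :
    F p α i (τ + c) = exp (Real.pi * I * c / 6) * F p α i τ := by
  simp [F, siegel_add_intCast]

lemma exp_pi_mul_I_mul_intCast_div_six_pow_twelve (c : ℤ) :
    exp (Real.pi * I * c / 6) ^ 12 = 1 := by
  rw [← exp_nat_mul, ← exp_int_mul_two_pi_mul_I c]
  push_cast
  ring_nf

theorem statement3_general (p : ℕ) (hp : p.Prime) (α : ℤ)
    (hα : orderOf (α : ZMod p) = p - 1) (n : ℕ)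
    (k : ℕ) :
    ∃ ζ : ℂ, ζ ^ 12 = 1 ∧
      ∀ i ≤ n - 1, ∀ τ : ℂ, 0 < τ.im →
        E p α i (τ + (α : ℂ) ^ k) =
          ζ ^ p * (-1 : ℂ) ^ (α ^ (i + k)) *
            Complex.exp (Real.pi * I * (α : ℂ) ^ (2 * i + k) / (p : ℂ)) * E p α i τ ∧
        F p α i (τ + (α : ℂ) ^ k) = ζ * F p α i τ := by
  have : Fact p.Prime := ⟨hp⟩
  refine ⟨exp (Real.pi * I * (α : ℂ) ^ k / 6), ?_,
    fun i _ τ _ => ⟨E_add_pow hα i k τ, ?_⟩⟩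
  · exact_mod_cast exp_pi_mul_I_mul_intCast_div_six_pow_twelve (α ^ k)
  · exact_mod_cast F_add_intCast p α i (α ^ k) τ

/-- transformation of `E_i` and `F_i` under `τ ↦ τ + α^k`
(the action of `γ_k = [[1,α^k],[0,1]]`): there is a 12th root of unity `ζ`
(depending only on `k`) with
`E_i(τ + α^k) = ζ^p·(−1)^{α^{i+k}}·e^{πi α^{2i+k}/p}·E_i(τ)` and
`F_i(τ + α^k) = ζ·F_i(τ)`. -/
theorem statement3 (p : ℕ) (hp : p.Prime) (hp5 : 5 ≤ p) (α : ℤ)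
    (hα : orderOf (α : ZMod p) = p - 1) (n : ℕ) (hn : n = (p - 1) / 2)
    (k : ℕ) (hk : k ≤ p - 2) :
    ∃ ζ : ℂ, ζ ^ 12 = 1 ∧
      ∀ i ≤ n - 1, ∀ τ : ℂ, 0 < τ.im →
        E p α i (τ + (α : ℂ) ^ k) =
          ζ ^ p * (-1 : ℂ) ^ (α ^ (i + k)) *
            Complex.exp (Real.pi * I * (α : ℂ) ^ (2 * i + k) / (p : ℂ)) * E p α i τ ∧
        F p α i (τ + (α : ℂ) ^ k) = ζ * F p α i τ :=
  statement3_general p hp α hα n k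

end SiegelPaper
end
end

section
/- ∑_{i=0}^{n−1} a_i = −n/12, where a_i = (p/2)·B₂({α^i/p}); equivalently, ∑_{i=0}^{n−1} B₂({α^i/p}) = −n/(6p). -/
noncomputable section

open Complex Filter Matrix

namespace SiegelPaper

/-!
Since `α` has order `p − 1 = 2n` modulo `p`, we have `αⁿ ≡ −1`, so the residues `±αⁱ`
(`i < n`) run once over the nonzero classes. As `B₂(1 − x) = B₂(x)`, the summand only
depends on `±αⁱ`, and the sum is half of `∑_{a=1}^{p−1} B₂(a/p) = 1/(6p) − B₂(0)`, which the
distribution relation `∑_{a=0}^{p−1} B₂(a/p) = B₂(0)/p` evaluates.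
-/

theorem _root_.Int.fract_intCast_div_natCast {k : Type*} [Field k] [LinearOrder k]
    [IsOrderedRing k] [FloorRing k] (a : ℤ) (p : ℕ) [NeZero p] :
    Int.fract ((a : k) / p) = ((a : ZMod p).val : k) / p := by
  rw [Int.fract_div_intCast_eq_div_intCast_mod, ← ZMod.val_intCast, Int.cast_natCast]

theorem B2R_one_sub (x : ℝ) : B2R (1 - x) = B2R x := by
  unfold B2R
  ring

theorem sum_range_B2R_div (m : ℕ) (q : ℝ) :
    ∑ a ∈ Finset.range m, B2R (a / q) =
      m * (m - 1) * (2 * m - 1) / (6 * q ^ 2) - m * (m - 1) / (2 * q) + m / 6 := by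
  induction m with
  | zero => simp
  | succ m ih =>
    rw [Finset.sum_range_succ, ih, B2R]
    push_cast
    ring

/-- `B₂({x/p})`, computed from the representative `x.val ∈ [0, p)`. -/
def B2ZMod (p : ℕ) (x : ZMod p) : ℝ := B2R ((x.val : ℝ) / p)

theorem B2ZMod_zero (p : ℕ) : B2ZMod p 0 = 1 / 6 := by
  simp [B2ZMod, B2R]

section B2ZMod

variable {p : ℕ} [NeZero p]

theorem B2ZMod_neg (x : ZMod p) : B2ZMod p (-x) = B2ZMod p x := by
  rcases eq_or_ne x 0 with rfl | hx
  · rw [neg_zero]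
  have hp : (p : ℝ) ≠ 0 := NeZero.ne _
  have hval : ((-x).val : ℝ) / p = 1 - (x.val : ℝ) / p := by
    rw [ZMod.neg_val, if_neg hx, Nat.cast_sub x.val_lt.le]
    field_simp
  rw [B2ZMod, hval, B2R_one_sub, B2ZMod]

/-- The distribution relation `∑_{a<p} B₂(a/p) = B₂(0)/p`. -/
theorem sum_B2ZMod : ∑ x : ZMod p, B2ZMod p x = 1 / (6 * p) := by
  obtain ⟨m, rfl⟩ := Nat.exists_eq_succ_of_ne_zero (NeZero.ne p)
  have hp : ((m + 1 : ℕ) : ℝ) ≠ 0 := by positivity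
  rw [show ∑ x : ZMod (m + 1), B2ZMod (m + 1) x = ∑ a ∈ Finset.range (m + 1),
      B2R (a / ((m + 1 : ℕ) : ℝ)) from
      Fin.sum_univ_eq_sum_range (fun a : ℕ => B2R (a / ((m + 1 : ℕ) : ℝ))) (m + 1),
    sum_range_B2R_div]
  field_simp
  ring

theorem sum_B2ZMod_erase_zero [DecidableEq (ZMod p)] :
    ∑ x ∈ Finset.univ.erase 0, B2ZMod p x = 1 / (6 * p) - 1 / 6 := by
  rw [Finset.sum_erase_eq_sub (Finset.mem_univ _), sum_B2ZMod, B2ZMod_zero]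

end B2ZMod

theorem _root_.IsPrimitiveRoot.image_range_pow_eq_erase_zero {F : Type*} [Field F] [Fintype F]
    [DecidableEq F] {a : F} (ha : IsPrimitiveRoot a (Fintype.card F - 1)) :
    (Finset.range (Fintype.card F - 1)).image (a ^ ·) = Finset.univ.erase 0 := by
  have hcard : Fintype.card F - 1 ≠ 0 := by have := Fintype.one_lt_card (α := F); omega
  refine Finset.eq_of_subset_of_card_le ?_ ?_
  · intro x hx
    obtain ⟨i, -, rfl⟩ := Finset.mem_image.mp hx
    exact Finset.mem_erase.mpr ⟨pow_ne_zero _ (ha.ne_zero hcard), Finset.mem_univ _⟩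
  · rw [Finset.card_image_of_injOn, Finset.card_range, Finset.card_erase_of_mem
      (Finset.mem_univ _), Finset.card_univ]
    intro i hi j hj
    exact ha.pow_inj (by simpa using hi) (by simpa using hj)

theorem _root_.IsPrimitiveRoot.sum_range_pow_eq_sum_erase_zero {F M : Type*} [Field F]
    [Fintype F] [DecidableEq F] [AddCommMonoid M] {a : F}
    (ha : IsPrimitiveRoot a (Fintype.card F - 1)) (f : F → M) :
    ∑ i ∈ Finset.range (Fintype.card F - 1), f (a ^ i) =
      ∑ x ∈ Finset.univ.erase 0, f x := by
  rw [← ha.image_range_pow_eq_erase_zero, Finset.sum_image]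
  intro i hi j hj
  exact ha.pow_inj (by simpa using hi) (by simpa using hj)

theorem _root_.IsPrimitiveRoot.pow_eq_neg_one {R : Type*} [CommRing R] [NoZeroDivisors R]
    {a : R} {n : ℕ} (ha : IsPrimitiveRoot a (2 * n)) (hn : n ≠ 0) : a ^ n = -1 :=
  (Nat.mul_div_cancel _ (Nat.pos_of_ne_zero hn) ▸
    ha.pow_of_dvd hn (dvd_mul_left n 2)).eq_neg_one_of_two_right

theorem sum_range_two_mul_pow_of_pow_eq_neg_one {R M : Type*} [Monoid R] [HasDistribNeg R]
    [AddCommMonoid M] {a : R} {n : ℕ} (ha : a ^ n = -1) (f : R → M) (hf : ∀ x, f (-x) = f x) :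
    ∑ i ∈ Finset.range (2 * n), f (a ^ i) = 2 • ∑ i ∈ Finset.range n, f (a ^ i) := by
  simp only [two_mul, Finset.sum_range_add, pow_add, ha, neg_one_mul, hf, two_nsmul]

/-- `∑_{i=0}^{n−1} a_i = −n/12`, where `a_i = (p/2)·B₂({αⁱ/p})`. -/
theorem statement6 (p n : ℕ) (hp : p.Prime) (hp5 : 5 ≤ p) (hn : n = (p - 1) / 2)
    (α : ℤ) (hα : orderOf (α : ZMod p) = p - 1) :
    ∑ i ∈ Finset.range n, ((p : ℝ) / 2) * B2R (Int.fract ((α : ℝ) ^ i / (p : ℝ))) =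
      -(n : ℝ) / 12 := by
  have : Fact p.Prime := ⟨hp⟩
  have hpn : p = 2 * n + 1 := by
    obtain ⟨k, rfl⟩ := hp.odd_of_ne_two (by omega)
    omega
  have hcard : Fintype.card (ZMod p) - 1 = 2 * n := by rw [ZMod.card]; omega
  have hprim : IsPrimitiveRoot (α : ZMod p) (Fintype.card (ZMod p) - 1) := by
    rwa [ZMod.card, IsPrimitiveRoot.iff_orderOf]
  have hneg : (α : ZMod p) ^ n = -1 := (hcard ▸ hprim).pow_eq_neg_one (by omega)
  have hhalf :
      2 • ∑ i ∈ Finset.range n, B2ZMod p ((α : ZMod p) ^ i) = 1 / (6 * p) - 1 / 6 := by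
    rw [← sum_range_two_mul_pow_of_pow_eq_neg_one hneg _ B2ZMod_neg, ← hcard,
      hprim.sum_range_pow_eq_sum_erase_zero, sum_B2ZMod_erase_zero]
  have hterm (i : ℕ) :
      B2R (Int.fract ((α : ℝ) ^ i / p)) = B2ZMod p ((α : ZMod p) ^ i) := by
    rw [B2ZMod]
    exact_mod_cast congrArg B2R (Int.fract_intCast_div_natCast (k := ℝ) (α ^ i) p)
  simp only [hterm, ← Finset.mul_sum]
  rw [two_nsmul, ← two_mul] at hhalf
  have hp0 : (p : ℝ) ≠ 0 := NeZero.ne _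
  calc (p : ℝ) / 2 * ∑ i ∈ Finset.range n, B2ZMod p ((α : ZMod p) ^ i)
      = p / 4 * (1 / (6 * p) - 1 / 6) := by rw [← hhalf]; ring
    _ = (1 - p) / 24 := by field_simp; ring
    _ = -(n : ℝ) / 12 := by rw [hpn]; push_cast; ring

end SiegelPaper
end
end

section
/- Let N be the n×n real matrix with entries N_{ij} = a_{(i+j) mod n} − 1/12 for 0 ≤ i,j ≤ n−1. Then |det N| = (n/6) · ∏_χ |(1/4)·B_{2,χ}|, where the product runs over all even non-principal Dirichlet characters χ modulo p. -/
noncomputable section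

open Complex Filter Matrix

namespace SiegelPaper

/-!
The `(i, j)` entry of `N` depends only on `i + j` in `ℤ/n`. If `W = (ω^{ij})` is the Vandermonde
matrix of a primitive `n`-th root of unity `ω`, then `N W` is `W` with its columns permuted by
`s ↦ -s`, times `diag(λ_s)` with `λ_s = ∑_k ω^{ks} N_{0k}`. Hence `det N = ± ∏_s λ_s`.

For `s = 0` the distribution relation `∑_{x<p} B₂(x/p) = 1/(6p)` gives `λ_0 = -n/6`. For `s ≠ 0`
the constant `-1/12` drops out of `λ_s`. Reindexing the sum defining `B_{2,χ}` along the powers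
`α^t`, `t < p - 1`, and folding it in half with `α^n = -1` and `B₂(1 - x) = B₂(x)` gives
`λ_s = B_{2,χ_s}/4`, where `χ_s(α) = ω^s`. The map `s ↦ χ_s` is a bijection from the nonzero `s`
onto the even non-principal characters.
-/

section HankelCirculant

theorem pow_val_add_mul {M : Type*} [Monoid M] {n : ℕ} {ω : M} (hω : ω ^ n = 1)
    (x y : Fin n) (m : ℕ) :
    ω ^ ((x + y : Fin n).val * m) = ω ^ (x.val * m) * ω ^ (y.val * m) := by
  rw [← pow_add, ← add_mul, pow_eq_pow_mod _ hω, Fin.val_add, Nat.mod_mul_mod,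
    ← pow_eq_pow_mod _ hω]

theorem det_of_add_eq_sign_mul_prod {K : Type*} [Field K] {n : ℕ} [NeZero n] {ω : K}
    (hω : IsPrimitiveRoot ω n) (f : Fin n → K) :
    (Matrix.of fun i j : Fin n => f (i + j)).det =
      Equiv.Perm.sign (Equiv.neg (Fin n)) *
        ∏ s : Fin n, ∑ k : Fin n, ω ^ (k.val * s.val) * f k := by
  set W : Matrix (Fin n) (Fin n) K := Matrix.of fun i s => ω ^ (i.val * s.val)
  have hW : W.det ≠ 0 := by
    rw [show W = Matrix.vandermonde fun i : Fin n => ω ^ i.val by ext i s; simp [W, pow_mul]]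
    exact Matrix.det_vandermonde_ne_zero_iff.mpr fun i j h => Fin.ext (hω.pow_inj i.isLt j.isLt h)
  have hmul : Matrix.of (fun i j : Fin n => f (i + j)) * W =
      W.submatrix id (Equiv.neg (Fin n)) *
        Matrix.diagonal fun s => ∑ k : Fin n, ω ^ (k.val * s.val) * f k := by
    ext i s
    have hshift : ∑ k : Fin n, ω ^ (k.val * s.val) * f k =
        ω ^ (i.val * s.val) * ∑ j, f (i + j) * ω ^ (j.val * s.val) := by
      rw [Finset.mul_sum, ← Equiv.sum_comp (Equiv.addLeft i)]
      refine Finset.sum_congr rfl fun j _ => ?_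
      rw [Equiv.coe_addLeft, pow_val_add_mul hω.pow_eq_one]
      ring
    have hinv : ω ^ (i.val * (-s).val) * ω ^ (i.val * s.val) = 1 := by
      rw [mul_comm i.val, mul_comm i.val, ← pow_val_add_mul hω.pow_eq_one, neg_add_cancel,
        Fin.val_zero, zero_mul, pow_zero]
    rw [Matrix.mul_diagonal, Matrix.mul_apply]
    simp only [Matrix.of_apply, Matrix.submatrix_apply, id, Equiv.neg_apply, W]
    rw [hshift, ← mul_assoc, hinv, one_mul]
  have hdet := congrArg Matrix.det hmul
  rw [Matrix.det_mul, Matrix.det_mul, Matrix.det_permute', Matrix.det_diagonal] at hdet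
  apply mul_right_cancel₀ hW
  rw [hdet]
  ring

theorem norm_det_of_add_eq_prod {n : ℕ} [NeZero n] {ω : ℂ} (hω : IsPrimitiveRoot ω n)
    (f : Fin n → ℂ) :
    ‖(Matrix.of fun i j : Fin n => f (i + j)).det‖ =
      ∏ s : Fin n, ‖∑ k : Fin n, ω ^ (k.val * s.val) * f k‖ := by
  rw [det_of_add_eq_sign_mul_prod hω, norm_mul, norm_prod, Complex.norm_intCast,
    abs_unit_intCast, one_mul]

end HankelCirculant

section PowersOfGenerator

variable {p : ℕ} [Fact p.Prime] {g : ZMod p}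

theorem ne_zero_of_orderOf_eq_sub_one (hg : orderOf g = p - 1) : g ≠ 0 := by
  rintro rfl
  have h := pow_orderOf_eq_one (0 : ZMod p)
  rw [hg, zero_pow (Nat.sub_ne_zero_of_lt (Fact.out : p.Prime).one_lt)] at h
  exact zero_ne_one h

theorem injOn_pow_val (hg : orderOf g = p - 1) :
    Set.InjOn (fun t => (g ^ t).val) (Finset.range (p - 1)) := fun a ha b hb hab =>
  pow_injOn_Iio_orderOf (by simpa [hg] using ha) (by simpa [hg] using hb)
    (ZMod.val_injective p hab)

theorem image_range_pow_val (hg : orderOf g = p - 1) :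
    (Finset.range (p - 1)).image (fun t => (g ^ t).val) = Finset.Icc 1 (p - 1) := by
  refine Finset.eq_of_subset_of_card_le (fun x hx => ?_) ?_
  · obtain ⟨t, -, rfl⟩ := Finset.mem_image.mp hx
    have hlt := ZMod.val_lt (g ^ t)
    have hne : (g ^ t).val ≠ 0 :=
      (ZMod.val_ne_zero _).mpr (pow_ne_zero t (ne_zero_of_orderOf_eq_sub_one hg))
    rw [Finset.mem_Icc]
    omega
  · rw [Finset.card_image_of_injOn (injOn_pow_val hg), Nat.card_Icc, Finset.card_range]
    omega

theorem sum_Icc_eq_sum_range_pow_val (hg : orderOf g = p - 1) {M : Type*} [AddCommMonoid M]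
    (f : ℕ → M) :
    ∑ x ∈ Finset.Icc 1 (p - 1), f x = ∑ t ∈ Finset.range (p - 1), f (g ^ t).val := by
  rw [← image_range_pow_val hg, Finset.sum_image (injOn_pow_val hg)]

theorem exists_pow_eq_of_ne_zero (hg : orderOf g = p - 1) {x : ZMod p} (hx : x ≠ 0) :
    ∃ t, g ^ t = x := by
  have hmem : x.val ∈ Finset.Icc 1 (p - 1) := by
    have hlt := ZMod.val_lt x
    have hne : x.val ≠ 0 := (ZMod.val_ne_zero x).mpr hx
    rw [Finset.mem_Icc]
    omega
  rw [← image_range_pow_val hg] at hmem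
  obtain ⟨t, -, ht⟩ := Finset.mem_image.mp hmem
  exact ⟨t, ZMod.val_injective p ht⟩

theorem dirichletCharacter_eq_of_apply_eq (hg : orderOf g = p - 1) {R : Type*} [CommRing R]
    {χ ψ : DirichletCharacter R p} (h : χ g = ψ g) : χ = ψ := by
  refine MulChar.ext' fun x => ?_
  rcases eq_or_ne x 0 with rfl | hx
  · rw [MulChar.map_zero, MulChar.map_zero]
  · obtain ⟨t, rfl⟩ := exists_pow_eq_of_ne_zero hg hx
    rw [map_pow, map_pow, h]

theorem exists_dirichletCharacter_apply_eq (hg : orderOf g = p - 1) {R : Type*} [CommRing R]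
    {ζ : R} (hζ : ζ ^ (p - 1) = 1) : ∃ χ : DirichletCharacter R p, χ g = ζ := by
  have hp1 : p - 1 ≠ 0 := Nat.sub_ne_zero_of_lt (Fact.out : p.Prime).one_lt
  obtain ⟨u, rfl⟩ : IsUnit g := .of_pow_eq_one (hg ▸ pow_orderOf_eq_one g) hp1
  have hζu : IsUnit ζ := .of_pow_eq_one hζ hp1
  have hgen : ∀ x : (ZMod p)ˣ, x ∈ Subgroup.zpowers u := fun x => by
    obtain ⟨t, ht⟩ := exists_pow_eq_of_ne_zero hg x.ne_zero
    exact ⟨t, Units.ext (by simp [ht])⟩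
  have hdvd : orderOf hζu.unit ∣ orderOf u := by
    rw [← orderOf_units (y := u), hg]
    exact orderOf_dvd_of_pow_eq_one (Units.ext (by simp [hζ]))
  refine ⟨MulChar.ofUnitHom (monoidHomOfForallMemZpowers hgen hdvd), ?_⟩
  rw [MulChar.ofUnitHom_coe, monoidHomOfForallMemZpowers_apply_gen, hζu.unit_spec]

end PowersOfGenerator

section Bernoulli

theorem B2_one_sub (x : ℂ) : B2 (1 - x) = B2 x := by
  unfold B2
  ring

theorem sum_range_B2_div (m : ℕ) (hm : m ≠ 0) :
    ∑ x ∈ Finset.range m, B2 ((x : ℂ) / m) = 1 / (6 * m) := by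
  have hm' : (m : ℂ) ≠ 0 := Nat.cast_ne_zero.mpr hm
  have hpartial : ∀ k : ℕ, ∑ x ∈ Finset.range k, B2 ((x : ℂ) / m) =
      (k * (k - 1) * (2 * k - 1) / 6 - m * k * (k - 1) / 2 + k * m ^ 2 / 6) / m ^ 2 := by
    intro k
    induction k with
    | zero => simp
    | succ k ih =>
      rw [Finset.sum_range_succ, ih]
      unfold B2
      push_cast
      field_simp
      ring
  rw [hpartial]
  field_simp
  ring

theorem sum_Icc_B2_div (m : ℕ) (hm : m ≠ 0) :
    ∑ x ∈ Finset.Icc 1 (m - 1), B2 ((x : ℂ) / m) = 1 / (6 * m) - 1 / 6 := by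
  have h := sum_range_B2_div m hm
  rw [show Finset.range m = insert 0 (Finset.Icc 1 (m - 1)) by ext x; simp; omega,
    Finset.sum_insert (by simp)] at h
  rw [← h, B2]
  simp

end Bernoulli

theorem pow_eq_neg_one_of_orderOf_eq_two_mul {R : Type*} [Ring R] [NoZeroDivisors R] {x : R}
    {n : ℕ} (hx : orderOf x = 2 * n) (hn : n ≠ 0) : x ^ n = -1 := by
  have hsq : x ^ n * x ^ n = 1 := by rw [← pow_add, ← two_mul, ← hx, pow_orderOf_eq_one]
  exact (mul_self_eq_one_iff.mp hsq).resolve_left (pow_ne_one_of_lt_orderOf hn (by omega))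

section HalfPeriod

variable {p n : ℕ} [Fact p.Prime] {g : ZMod p}

theorem B2_pow_val_add (hg : orderOf g = p - 1) (hpn : p - 1 = 2 * n) (t : ℕ) :
    B2 (((g ^ (n + t)).val : ℂ) / p) = B2 (((g ^ t).val : ℂ) / p) := by
  have hp : (p : ℂ) ≠ 0 := Nat.cast_ne_zero.mpr (Fact.out : p.Prime).ne_zero
  have hp2 := (Fact.out : p.Prime).two_le
  have : NeZero (g ^ t) := ⟨pow_ne_zero t (ne_zero_of_orderOf_eq_sub_one hg)⟩
  rw [pow_add, pow_eq_neg_one_of_orderOf_eq_two_mul (hpn ▸ hg) (by omega), neg_one_mul,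
    ZMod.val_neg_of_ne_zero, Nat.cast_sub (ZMod.val_lt _).le, sub_div, div_self hp, B2_one_sub]

theorem sum_range_mul_B2_eq_two_mul (hg : orderOf g = p - 1) (hpn : p - 1 = 2 * n)
    (c : ℕ → ℂ) (hc : ∀ t, c (n + t) = c t) :
    ∑ t ∈ Finset.range (p - 1), c t * B2 (((g ^ t).val : ℂ) / p) =
      2 * ∑ t ∈ Finset.range n, c t * B2 (((g ^ t).val : ℂ) / p) := by
  rw [hpn, two_mul n, Finset.sum_range_add]
  simp only [hc, B2_pow_val_add hg hpn]
  ring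

end HalfPeriod

theorem sum_pow_mul_aC_sub_eq_yC {p n : ℕ} {α : ℤ} {ω : ℂ} (hω : IsPrimitiveRoot ω n) {s : ℕ}
    (hs0 : s ≠ 0) (hsn : s < n) :
    ∑ k : Fin n, ω ^ (k.val * s) * (aC p α k - 1 / 12) = yC p n α ω s := by
  have hgeom : ∑ k ∈ Finset.range n, (ω ^ s) ^ k = 0 := by
    rw [geom_sum_eq (hω.pow_ne_one_of_pos_of_lt hs0 hsn), ← pow_mul, mul_comm, pow_mul,
      hω.pow_eq_one, one_pow, sub_self, zero_div]
  rw [Fin.sum_univ_eq_sum_range (fun k => ω ^ (k * s) * (aC p α k - 1 / 12)), yC]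
  simp only [mul_sub, Finset.sum_sub_distrib, ← Finset.sum_mul, mul_comm _ s, pow_mul, hgeom,
    zero_mul, sub_zero]

section Eigenvalues

variable {p n : ℕ} [Fact p.Prime] {α : ℤ}

theorem aC_eq_B2_val (t : ℕ) : aC p α t = p / 2 * B2 ((((α : ZMod p) ^ t).val : ℂ) / p) := by
  have hfract : Int.fract ((α : ℝ) ^ t / p) = (((α : ZMod p) ^ t).val : ℝ) / p := by
    rw [show (α : ℝ) ^ t = ((α ^ t : ℤ) : ℝ) by push_cast; rfl,
      Int.fract_div_intCast_eq_div_intCast_mod, ← ZMod.val_intCast]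
    push_cast
    rfl
  rw [aC, hfract]
  push_cast
  rfl

theorem sum_range_aC (hα : orderOf (α : ZMod p) = p - 1) (hpn : p - 1 = 2 * n) :
    ∑ t ∈ Finset.range n, aC p α t = -(n / 12) := by
  have hp0 := (Fact.out : p.Prime).ne_zero
  have h := sum_range_mul_B2_eq_two_mul hα hpn (fun _ => 1) (fun _ => rfl)
  simp only [one_mul] at h
  rw [← sum_Icc_eq_sum_range_pow_val hα (fun x => B2 ((x : ℂ) / p)), sum_Icc_B2_div p hp0] at h
  simp only [aC_eq_B2_val, ← Finset.mul_sum]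
  have hp : (p : ℂ) = 2 * n + 1 := by exact_mod_cast (by omega : p = 2 * n + 1)
  have hp' : (p : ℂ) ≠ 0 := Nat.cast_ne_zero.mpr hp0
  field_simp at h
  linear_combination (-1 / 24 : ℂ) * h - (1 / 24 : ℂ) * hp

theorem sum_fin_aC_sub [NeZero n] (hα : orderOf (α : ZMod p) = p - 1) (hpn : p - 1 = 2 * n) :
    ∑ k : Fin n, (aC p α k - 1 / 12) = -(n / 6) := by
  rw [Fin.sum_univ_eq_sum_range (fun k => aC p α k - 1 / 12), Finset.sum_sub_distrib,
    sum_range_aC hα hpn, Finset.sum_const, Finset.card_range, nsmul_eq_mul]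
  ring

theorem B2chi_eq_four_mul_yC (hα : orderOf (α : ZMod p) = p - 1) (hpn : p - 1 = 2 * n)
    {ω : ℂ} (hω : ω ^ n = 1) {s : ℕ} {χ : DirichletCharacter ℂ p} (hχ : χ α = ω ^ s) :
    B2chi p χ = 4 * yC p n α ω s := by
  have hperiodic : ∀ t, (ω ^ s) ^ (n + t) = (ω ^ s) ^ t := fun t => by
    rw [pow_add, ← pow_mul ω s n, mul_comm s n, pow_mul, hω, one_pow, one_mul]
  rw [B2chi, sum_Icc_eq_sum_range_pow_val hα]
  simp only [ZMod.natCast_zmod_val, map_pow, hχ]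
  rw [sum_range_mul_B2_eq_two_mul hα hpn _ hperiodic, yC, Finset.mul_sum, Finset.mul_sum,
    Finset.mul_sum]
  refine Finset.sum_congr rfl fun t _ => ?_
  rw [aC_eq_B2_val, ← pow_mul]
  ring

theorem prod_even_nontrivial_eq_prod_erase_zero {ω : ℂ} (hα : orderOf (α : ZMod p) = p - 1)
    (hpn : p - 1 = 2 * n) [NeZero n] (hω : IsPrimitiveRoot ω n) {M : Type*} [CommMonoid M]
    (F : DirichletCharacter ℂ p → M) (χ : Fin n → DirichletCharacter ℂ p)
    (hχ : ∀ s, χ s α = ω ^ s.val) :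
    ∏ ψ ∈ Finset.univ.filter (fun ψ : DirichletCharacter ℂ p => ψ ≠ 1 ∧ ψ (-1) = 1), F ψ =
      ∏ s ∈ Finset.univ.erase 0, F (χ s) := by
  have hneg : (α : ZMod p) ^ n = -1 :=
    pow_eq_neg_one_of_orderOf_eq_two_mul (hpn ▸ hα) (NeZero.ne n)
  have hone : (1 : DirichletCharacter ℂ p) α = 1 :=
    MulChar.one_apply (isUnit_iff_ne_zero.mpr (ne_zero_of_orderOf_eq_sub_one hα))
  have heq_one : ∀ s, χ s = 1 ↔ s = 0 := fun s => by
    refine ⟨fun h => Fin.ext (Nat.eq_zero_of_dvd_of_lt ?_ s.isLt), fun h => ?_⟩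
    · rw [← hω.pow_eq_one_iff_dvd, ← hχ, h, hone]
    · exact dirichletCharacter_eq_of_apply_eq hα (by rw [hχ, hone, h, Fin.val_zero, pow_zero])
  refine (Finset.prod_bij (fun s _ => χ s) (fun s hs => ?_) (fun s _ s' _ h => ?_)
    (fun ψ hψ => ?_) (fun _ _ => rfl)).symm
  · rw [Finset.mem_filter, ← hneg, map_pow, hχ, ← pow_mul, mul_comm, pow_mul, hω.pow_eq_one,
      one_pow]
    exact ⟨Finset.mem_univ _, (heq_one s).not.mpr (Finset.ne_of_mem_erase hs), rfl⟩
  · exact Fin.ext (hω.pow_inj s.isLt s'.isLt (by rw [← hχ, ← hχ, h]))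
  · obtain ⟨-, hψ1, hψeven⟩ := Finset.mem_filter.mp hψ
    obtain ⟨i, hi, hωi⟩ := hω.eq_pow_of_pow_eq_one (by rwa [← map_pow, hneg] : ψ α ^ n = 1)
    have hψχ : χ ⟨i, hi⟩ = ψ := dirichletCharacter_eq_of_apply_eq hα (by rw [hχ, hωi])
    refine ⟨⟨i, hi⟩, Finset.mem_erase.mpr ⟨fun h0 => hψ1 ?_, Finset.mem_univ _⟩, hψχ⟩
    rw [← hψχ, heq_one, h0]

end Eigenvalues

open scoped Classical in
/-- `|det N| = (n/6)·∏_χ |(1/4)·B_{2,χ}|` where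
`N_{ij} = a_{(i+j) mod n} − 1/12` and the product is over all even non-principal Dirichlet
characters mod `p`. -/
theorem statement8 (p n : ℕ) (hp : p.Prime) (hp5 : 5 ≤ p) (hn : n = (p - 1) / 2)
    (α : ℤ) (hα : orderOf (α : ZMod p) = p - 1)
    (N : Matrix (Fin n) (Fin n) ℝ)
    (hN : ∀ i j : Fin n, N i j =
      ((p : ℝ) / 2) * B2R (Int.fract ((α : ℝ) ^ (((i : ℕ) + (j : ℕ)) % n) / (p : ℝ))) - 1 / 12) :
    |N.det| =
      ((n : ℝ) / 6) *
        ∏ χ ∈ Finset.univ.filter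
            (fun χ : DirichletCharacter ℂ p => χ ≠ 1 ∧ χ (-1) = 1),
          ‖(1 / 4) * B2chi p χ‖ := by
  have : Fact p.Prime := ⟨hp⟩
  have hpn : p - 1 = 2 * n := by have := Nat.odd_iff.mp (hp.odd_of_ne_two (by omega)); omega
  have : NeZero n := ⟨by omega⟩
  obtain ⟨ω, hω⟩ : ∃ ω : ℂ, IsPrimitiveRoot ω n :=
    ⟨_, Complex.isPrimitiveRoot_exp n (NeZero.ne n)⟩
  set f : Fin n → ℂ := fun k => aC p α k - 1 / 12
  have hNf : N.map Complex.ofReal = Matrix.of fun i j : Fin n => f (i + j) := by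
    ext i j
    rw [Matrix.map_apply, hN, Matrix.of_apply]
    simp only [f, aC, Fin.val_add, B2R, B2]
    push_cast
    rfl
  have hcast : ((N.det : ℝ) : ℂ) = (N.map Complex.ofReal).det :=
    RingHom.map_det Complex.ofRealHom N
  have hζ (s : Fin n) : (ω ^ s.val) ^ (p - 1) = 1 := by
    rw [hpn, ← pow_mul, show s.val * (2 * n) = n * (2 * s.val) by ring, pow_mul,
      hω.pow_eq_one, one_pow]
  choose χ hχ using fun s : Fin n => exists_dirichletCharacter_apply_eq hα (hζ s)
  rw [← Real.norm_eq_abs, ← Complex.norm_real, hcast, hNf, norm_det_of_add_eq_prod hω f,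
    ← Finset.mul_prod_erase _ _ (Finset.mem_univ 0),
    -- the statement decides `ψ ≠ 1` classically, the lemma through `FunLike.toDecidableEq`
    Finset.filter_congr_decidable, prod_even_nontrivial_eq_prod_erase_zero hα hpn hω _ χ hχ]
  congr 1
  · simp only [Fin.val_zero, mul_zero, pow_zero, one_mul, f]
    rw [sum_fin_aC_sub hα hpn, norm_neg, norm_div, Complex.norm_natCast, Complex.norm_ofNat]
  · refine Finset.prod_congr rfl fun s hs => ?_
    rw [B2chi_eq_four_mul_yC hα hpn hω.pow_eq_one (hχ s), ← mul_assoc,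
      one_div_mul_cancel (by norm_num : (4 : ℂ) ≠ 0), one_mul,
      sum_pow_mul_aC_sub_eq_yC hω (Fin.val_ne_zero_iff.mpr (Finset.ne_of_mem_erase hs)) s.isLt]

end SiegelPaper
end
end

section
/- For every 0 ≤ j ≤ n−1 the complex number b_j is rational, i.e. there exists q ∈ ℚ with b_j = q. -/
noncomputable section

open Complex Filter Matrix

/-!
Writing `A = ∑_{t<n} a_t X^t ∈ ℚ[X]`, we have `y_s = A(ω^s)`, so `n · b_j` is the sum of the
rational function `1 / (X^j A)` over the `n`-th roots of unity. Inside the cyclotomic field `ℚ(ω)`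
every Galois automorphism permutes these roots and commutes with evaluating rational polynomials,
so this sum is Galois-invariant and therefore rational.
-/

open Polynomial Finset IntermediateField

theorem IsPrimitiveRoot.sum_range_pow_eq_sum_nthRootsFinset {R M : Type*} [CommRing R]
    [IsDomain R] [AddCommMonoid M] {ζ : R} {n : ℕ} (hζ : IsPrimitiveRoot ζ n) (f : R → M) :
    ∑ s ∈ range n, f (ζ ^ s) = ∑ x ∈ nthRootsFinset n (1 : R), f x := by
  classical
  have himage : nthRootsFinset n (1 : R) = (range n).image (ζ ^ ·) := by
    rw [nthRootsFinset_def, hζ.nthRoots_eq (one_pow n)]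
    simp only [mul_one]
    rfl
  rw [himage, sum_image fun a ha b hb => hζ.pow_inj (mem_range.1 ha) (mem_range.1 hb)]

theorem IsPrimitiveRoot.isCyclotomicExtension_adjoin_simple {F L : Type*} [Field F] [Field L]
    [Algebra F L] {ω : L} {n : ℕ} [NeZero n] (hω : IsPrimitiveRoot ω n) :
    IsCyclotomicExtension {n} F F⟮ω⟯ := by
  change IsCyclotomicExtension {n} F F⟮ω⟯.toSubalgebra
  rw [adjoin_simple_toSubalgebra_of_isAlgebraic
    ((hω.isIntegral (NeZero.pos n)).tower_top (A := F)).isAlgebraic]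
  exact hω.adjoin_isCyclotomicExtension F

section RationalFunctionOnRootsOfUnity

variable {F : Type*} [Field F]

theorem sum_nthRootsFinset_aeval_div_mem_range {K : Type*} [Field K] [Algebra F K]
    [IsGalois F K] (n : ℕ) (P Q : F[X]) :
    ∑ x ∈ nthRootsFinset n (1 : K), aeval x P / aeval x Q ∈ Set.range (algebraMap F K) := by
  rw [InfiniteGalois.mem_range_algebraMap_iff_fixed]
  intro σ
  simp only [map_sum, map_div₀, ← aeval_algHom_apply]
  refine sum_equiv σ.toEquiv (fun x => ?_) (fun _ _ => rfl)
  rcases n.eq_zero_or_pos with rfl | hn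
  · simp
  · simp [mem_nthRootsFinset hn, ← map_pow]

theorem IsPrimitiveRoot.exists_algebraMap_eq_sum_aeval_div {L : Type*} [Field L] [Algebra F L]
    {ω : L} {n : ℕ} (hω : IsPrimitiveRoot ω n) (P Q : F[X]) :
    ∃ q : F, algebraMap F L q = ∑ s ∈ range n, aeval (ω ^ s) P / aeval (ω ^ s) Q := by
  rcases n.eq_zero_or_pos with rfl | hn
  · exact ⟨0, by simp⟩
  have : NeZero n := ⟨hn.ne'⟩
  have := hω.isCyclotomicExtension_adjoin_simple (F := F)
  have := IsCyclotomicExtension.isGalois {n} F F⟮ω⟯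
  have hζ : IsPrimitiveRoot (AdjoinSimple.gen F ω) n :=
    IsPrimitiveRoot.coe_submonoidClass_iff.mp hω
  obtain ⟨q, hq⟩ := sum_nthRootsFinset_aeval_div_mem_range (K := F⟮ω⟯) n P Q
  rw [← hζ.sum_range_pow_eq_sum_nthRootsFinset] at hq
  refine ⟨q, ?_⟩
  have hval := congrArg F⟮ω⟯.val hq
  simp only [map_sum, map_div₀, map_pow, ← aeval_algHom_apply] at hval
  exact hval

end RationalFunctionOnRootsOfUnity

namespace SiegelPaper

def aQ (p : ℕ) (α : ℤ) (t : ℕ) : ℚ :=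
  (p / 2) * (Int.fract ((α : ℚ) ^ t / p) ^ 2 - Int.fract ((α : ℚ) ^ t / p) + 1 / 6)

theorem aC_eq_aQ (p : ℕ) (α : ℤ) (t : ℕ) : aC p α t = aQ p α t := by
  have hcast : (((α : ℚ) ^ t / p : ℚ) : ℝ) = (α : ℝ) ^ t / p := by push_cast; rfl
  rw [aC, B2, ← hcast, ← Rat.cast_fract, Complex.ofReal_ratCast, aQ]
  push_cast
  ring

def aPoly (p n : ℕ) (α : ℤ) : ℚ[X] := ∑ t ∈ range n, C (aQ p α t) * X ^ t

theorem yC_eq_aeval (p n : ℕ) (α : ℤ) (ω : ℂ) (s : ℕ) :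
    yC p n α ω s = aeval (ω ^ s) (aPoly p n α) := by
  simp only [yC, aPoly, map_sum, map_mul, aeval_C, aeval_X_pow, aC_eq_aQ, ← pow_mul]
  exact sum_congr rfl fun t _ => mul_comm _ _

theorem bC_eq_sum_inv_aeval (p n : ℕ) (α : ℤ) (ω : ℂ) (j : ℕ) :
    bC p n α ω j = (1 / n) * ∑ s ∈ range n, (aeval (ω ^ s) (X ^ j * aPoly p n α))⁻¹ := by
  rw [bC]
  congr 1
  refine sum_congr rfl fun s _ => ?_
  rw [yC_eq_aeval, map_mul, aeval_X_pow, mul_inv, ← pow_mul, mul_comm s j, _root_.zpow_neg,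
    ← Nat.cast_mul, zpow_natCast]

theorem statement16_general (p n : ℕ) (α : ℤ) (ω : ℂ) (hω : IsPrimitiveRoot ω n) (j : ℕ) :
    ∃ q : ℚ, bC p n α ω j = (q : ℂ) := by
  obtain ⟨q, hq⟩ := hω.exists_algebraMap_eq_sum_aeval_div 1 (X ^ j * aPoly p n α)
  refine ⟨q / n, ?_⟩
  rw [bC_eq_sum_inv_aeval]
  simp only [map_one, one_div] at hq
  rw [← hq]
  simp [div_eq_inv_mul]

/-- each `b_j` is a rational number. -/
theorem statement16 (p n : ℕ) (hp : p.Prime) (hp5 : 5 ≤ p) (hn : n = (p - 1) / 2)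
    (α : ℤ) (hα : orderOf (α : ZMod p) = p - 1)
    (ω : ℂ) (hω : IsPrimitiveRoot ω n) (j : ℕ) (hj : j < n) :
    ∃ q : ℚ, bC p n α ω j = (q : ℂ) :=
  statement16_general p n α ω hω j

end SiegelPaper
end
end
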